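/- Let Σ be a signature, C a collection of new constants not occurring in Σ, and Σ_C the signature obtained by adding the constants C to Σ. If φ and ψ are formulas in the language of Σ and φ ⊢_{Σ_C} ψ is derivable in QRC₁ over Σ_C, then φ ⊢_Σ ψ is derivable in QRC₁ over Σ. -/

import Mathlib

/-- A signature: constants and relation symbols with arities (no function symbols). -/
structure Signature where
  Const : Type
  Rel : Type
  arity : Rel → ℕ

/-- Terms: variables (numbered) or constants. -/
inductive Term (Sig : Signature) : Type where
  | var : ℕ → Term Sig
  | const : Sig.Const → Term Sig

/-- Strictly positive formulas of QRC₁. -/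
inductive Formula (Sig : Signature) : Type where
  | top : Formula Sig
  | rel : (S : Sig.Rel) → (Fin (Sig.arity S) → Term Sig) → Formula Sig
  | and : Formula Sig → Formula Sig → Formula Sig
  | dia : Formula Sig → Formula Sig
  | all : ℕ → Formula Sig → Formula Sig

namespace Term

variable {Sig : Signature}

def fv : Term Sig → Set ℕ
  | var x => {x}
  | const _ => ∅

def consts : Term Sig → Set Sig.Const
  | var _ => ∅
  | const c => {c}

def subst (t : Term Sig) (x : ℕ) (u : Term Sig) : Term Sig :=
  match t with
  | var y => if y = x then u else var y
  | const c => const c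

end Term

namespace Formula

variable {Sig : Signature}

/-- Free variables of a formula. -/
def fv : Formula Sig → Set ℕ
  | top => ∅
  | rel _ ts => ⋃ i, (ts i).fv
  | and φ ψ => φ.fv ∪ ψ.fv
  | dia φ => φ.fv
  | all x φ => φ.fv \ {x}

/-- Constants occurring in a formula. -/
def consts : Formula Sig → Set Sig.Const
  | top => ∅
  | rel _ ts => ⋃ i, (ts i).consts
  | and φ ψ => φ.consts ∪ ψ.consts
  | dia φ => φ.consts
  | all _ φ => φ.consts

/-- Simultaneous substitution of the term `u` for the free occurrences of `x`. -/
def subst : Formula Sig → ℕ → Term Sig → Formula Sig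
  | top, _, _ => top
  | rel S ts, x, u => rel S (fun i => (ts i).subst x u)
  | and φ ψ, x, u => and (φ.subst x u) (ψ.subst x u)
  | dia φ, x, u => dia (φ.subst x u)
  | all y φ, x, u => if y = x then all y φ else all y (φ.subst x u)

/-- `t` is free for `x` in `φ`: no free variable of `t` becomes bound in `φ[x/t]`. -/
def freeFor : Formula Sig → ℕ → Term Sig → Prop
  | top, _, _ => True
  | rel _ _, _, _ => True
  | and φ ψ, x, t => φ.freeFor x t ∧ ψ.freeFor x t
  | dia φ, x, t => φ.freeFor x t
  | all y φ, x, t => x ∉ (Formula.all y φ).fv ∨ (y ∉ t.fv ∧ φ.freeFor x t)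

/-- Modal depth. -/
def mdepth : Formula Sig → ℕ
  | top => 0
  | rel _ _ => 0
  | and φ ψ => max φ.mdepth ψ.mdepth
  | dia φ => φ.mdepth + 1
  | all _ φ => φ.mdepth

def size : Formula Sig → ℕ
  | top => 1
  | rel _ _ => 1
  | and φ ψ => φ.size + ψ.size + 1
  | dia φ => φ.size + 1
  | all _ φ => φ.size + 1

theorem size_subst (φ : Formula Sig) (x : ℕ) (t : Term Sig) :
    (φ.subst x t).size = φ.size := by
  induction φ with
  | top => rfl
  | rel S ts => rfl
  | and φ ψ ihφ ihψ => simp [Formula.subst, Formula.size, ihφ, ihψ]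
  | dia φ ih => simp [Formula.subst, Formula.size, ih]
  | all y φ ih =>
      by_cases h : y = x <;> simp [Formula.subst, Formula.size, h, ih]

end Formula

/-- Derivability of sequents `φ ⊢ ψ` in QRC₁. -/
inductive Derives {Sig : Signature} : Formula Sig → Formula Sig → Prop where
  | topIntro (φ : Formula Sig) : Derives φ .top
  | refl (φ : Formula Sig) : Derives φ φ
  | andE₁ (φ ψ : Formula Sig) : Derives (.and φ ψ) φ
  | andE₂ (φ ψ : Formula Sig) : Derives (.and φ ψ) ψ
  | andI {φ ψ χ : Formula Sig} : Derives φ ψ → Derives φ χ → Derives φ (.and ψ χ)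
  | cut {φ ψ χ : Formula Sig} : Derives φ ψ → Derives ψ χ → Derives φ χ
  | nec {φ ψ : Formula Sig} : Derives φ ψ → Derives (.dia φ) (.dia ψ)
  | diaTrans (φ : Formula Sig) : Derives (.dia (.dia φ)) (.dia φ)
  | diaAll (x : ℕ) (φ : Formula Sig) : Derives (.dia (.all x φ)) (.all x (.dia φ))
  | allR {φ ψ : Formula Sig} {x : ℕ} : Derives φ ψ → x ∉ φ.fv → Derives φ (.all x ψ)
  | allL {φ ψ : Formula Sig} {x : ℕ} {t : Term Sig} :
      Derives (φ.subst x t) ψ → φ.freeFor x t → Derives (.all x φ) ψ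
  | termInst {φ ψ : Formula Sig} {x : ℕ} {t : Term Sig} :
      Derives φ ψ → φ.freeFor x t → ψ.freeFor x t →
      Derives (φ.subst x t) (ψ.subst x t)
  | constGen {φ ψ : Formula Sig} {x : ℕ} {c : Sig.Const} :
      Derives (φ.subst x (.const c)) (ψ.subst x (.const c)) →
      c ∉ φ.consts → c ∉ ψ.consts → Derives φ ψ

/-- Extension of a signature by a collection `C` of new constants. -/
def Signature.extend (Sig : Signature) (C : Type) : Signature :=
  ⟨Sig.Const ⊕ C, Sig.Rel, Sig.arity⟩

/-- A term of `Sig` seen as a term of the extended signature. -/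
def Term.lift {Sig : Signature} {C : Type} : Term Sig → Term (Sig.extend C)
  | .var x => .var x
  | .const c => .const (Sum.inl c)

/-- A formula of `Sig` seen as a formula of the extended signature. -/
def Formula.lift {Sig : Signature} {C : Type} : Formula Sig → Formula (Sig.extend C)
  | .top => .top
  | .rel S ts => .rel S (fun i => (ts i).lift)
  | .and φ ψ => .and φ.lift ψ.lift
  | .dia φ => .dia φ.lift
  | .all x φ => .all x φ.lift

/-! ### Relational semantics -/

/-- A relational model (on an underlying frame `⟨W, R, D⟩`):
worlds, accessibility, finite domains, constant and relation interpretations. -/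
structure Model (Sig : Signature) where
  W : Type
  U : Type
  nonempty : Nonempty W
  R : W → W → Prop
  D : W → Set U
  Dfin : ∀ w, (D w).Finite
  I : W → Sig.Const → U
  Imem : ∀ w c, I w c ∈ D w
  J : (w : W) → (S : Sig.Rel) → Set (Fin (Sig.arity S) → U)
  Jmem : ∀ w S f, f ∈ J w S → ∀ i, f i ∈ D w

namespace Model

variable {Sig : Signature}

/-- A `w`-assignment: a map from variables into the domain of `w`. -/
def IsAssignment (M : Model Sig) (w : M.W) (g : ℕ → M.U) : Prop :=
  ∀ n, g n ∈ M.D w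

/-- Value of a term at a world under an assignment. -/
def tval (M : Model Sig) (w : M.W) (g : ℕ → M.U) : Term Sig → M.U
  | .var x => g x
  | .const c => M.I w c

end Model

/-- `Γ`-alternative assignments: they agree on all variables outside `Γ`. -/
def AltOn {U : Type} (Γ : Set ℕ) (g h : ℕ → U) : Prop :=
  ∀ y, y ∉ Γ → g y = h y

/-- Truth at a world under an assignment. -/
def Model.Forces {Sig : Signature} (M : Model Sig) :
    M.W → (ℕ → M.U) → Formula Sig → Prop
  | _, _, .top => True
  | w, g, .rel S ts => (fun i => M.tval w g (ts i)) ∈ M.J w S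
  | w, g, .and φ ψ => M.Forces w g φ ∧ M.Forces w g ψ
  | w, g, .dia φ => ∃ v, M.R w v ∧ M.Forces v g φ
  | w, g, .all x φ =>
      ∀ h : ℕ → M.U, M.IsAssignment w h → AltOn {x} g h → M.Forces w h φ

/-- Adequate models: inclusive, transitive, and concordant. -/
def Model.Adequate {Sig : Signature} (M : Model Sig) : Prop :=
  (∀ w u, M.R w u → M.D w ⊆ M.D u) ∧
  (∀ w u v, M.R w u → M.R u v → M.R w v) ∧
  (∀ w u, M.R w u → ∀ c, M.I w c = M.I u c)

/-- The model `M` restricted at the world `r`. -/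
def Model.restrict {Sig : Signature} (M : Model Sig) (r : M.W) : Model Sig where
  W := {w : M.W // w = r ∨ M.R r w}
  U := M.U
  nonempty := ⟨⟨r, Or.inl rfl⟩⟩
  R w v := M.R w.1 v.1
  D w := M.D w.1
  Dfin w := M.Dfin w.1
  I w c := M.I w.1 c
  Imem w c := M.Imem w.1 c
  J w S := M.J w.1 S
  Jmem w S f h i := M.Jmem w.1 S f h i

/-- The model `M` restricted at `r`, with the interpretation of the constant `c`
set to `d ∈ M_r` at every world. -/
noncomputable def Model.restrictSubst {Sig : Signature} (M : Model Sig) (r : M.W) (c : Sig.Const)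
    (d : M.U) (hd : d ∈ M.D r) (hinc : ∀ w u, M.R w u → M.D w ⊆ M.D u) : Model Sig :=
  { M.restrict r with
    I := fun w c' => @ite _ (c' = c) (Classical.propDecidable _) d (M.I w.1 c')
    Imem := by
      intro w c'
      by_cases h : c' = c
      · simp only [h, if_pos rfl]
        rcases w.2 with h' | h'
        · show d ∈ M.D w.1; rw [h']; exact hd
        · exact hinc r w.1 h' hd
      · refine (congrArg (· ∈ M.D w.1) (if_neg h)).mpr ?_
        exact M.Imem w.1 c' }

/-! ### Pairs, closure, maximal consistency -/

/-- A pair of sets of formulas (positive and negative part). -/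
structure Pair (Sig : Signature) where
  pos : Set (Formula Sig)
  neg : Set (Formula Sig)

/-- `Γ ⊢ φ`: some finite conjunction of members of `Γ` derives `φ`. -/
def SetDerives {Sig : Signature} (Γ : Set (Formula Sig)) (φ : Formula Sig) : Prop :=
  ∃ (γ : Formula Sig) (l : List (Formula Sig)),
    γ ∈ Γ ∧ (∀ δ ∈ l, δ ∈ Γ) ∧ Derives (l.foldl Formula.and γ) φ

namespace Pair

variable {Sig : Signature}

/-- A pair is consistent if no member of the negative part follows from the positive part. -/
def Consistent (p : Pair Sig) : Prop :=
  ∀ δ ∈ p.neg, ¬ SetDerives p.pos δ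

/-- `q` is a `Φ`-extension of `p`. -/
def Ext (p q : Pair Sig) (Φ : Set (Formula Sig)) : Prop :=
  p.pos ⊆ q.pos ∧ q.pos ⊆ Φ ∧ p.neg ⊆ q.neg ∧ q.neg ⊆ Φ

/-- `Φ`-maximal consistency. -/
def MaxCons (p : Pair Sig) (Φ : Set (Formula Sig)) : Prop :=
  p.Consistent ∧ p.pos ⊆ Φ ∧ p.neg ⊆ Φ ∧
    ∀ q : Pair Sig, p.Ext q Φ → q.Consistent → q = p

/-- A pair is fully witnessed if every negative universal has a constant witness. -/
def FullyWitnessed (p : Pair Sig) : Prop :=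
  ∀ (x : ℕ) (φ : Formula Sig), Formula.all x φ ∈ p.neg →
    ∃ c : Sig.Const, φ.subst x (.const c) ∈ p.neg

end Pair

/-- Closure of a formula under a set of constants. -/
def Cl {Sig : Signature} (C : Set Sig.Const) : Formula Sig → Set (Formula Sig)
  | .top => {.top}
  | .rel S ts => {.rel S ts, .top}
  | .and φ ψ => {.and φ ψ} ∪ Cl C φ ∪ Cl C ψ
  | .dia φ => {.dia φ} ∪ Cl C φ
  | .all x φ => {.all x φ} ∪ ⋃ c ∈ C, Cl C (φ.subst x (.const c))
termination_by φ => φ.size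
decreasing_by
  all_goals simp [Formula.size, Formula.size_subst]
  all_goals omega

/-- Closure of a set of formulas under a set of constants. -/
def ClSet {Sig : Signature} (C : Set Sig.Const) (Γ : Set (Formula Sig)) :
    Set (Formula Sig) :=
  ⋃ φ ∈ Γ, Cl C φ

/-- Modal depth of a set of formulas (as a supremum in ℕ). -/
noncomputable def mdepthSet {Sig : Signature} (Γ : Set (Formula Sig)) : ℕ :=
  sSup (Formula.mdepth '' Γ)

/-- The relation `R̂` between pairs. -/
def hatR {Sig : Signature} (p q : Pair Sig) : Prop :=
  (∀ φ : Formula Sig, Formula.dia φ ∈ p.neg → φ ∈ q.neg ∧ Formula.dia φ ∈ q.neg) ∧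
  (∃ ψ : Formula Sig, Formula.dia ψ ∈ p.pos ∧ Formula.dia ψ ∈ q.neg)


/-! Replace every new constant `c` by a variable `σ c`. If `σ` is injective on the finitely
many new constants of a derivation and avoids its finitely many variables, every rule instance
becomes an instance of the same rule over `Sig`, except generalisation over a new constant `c`:
it becomes a renaming `x ↦ σ c`, which can be undone because `σ c` is fresh. Such sufficiently
fresh `σ` form a proper filter on `C → ℕ`, so the translated sequent holds eventually along it,
and the translation fixes lifted formulas. -/

namespace Term

variable {Sig : Signature}

theorem fv_finite (t : Term Sig) : t.fv.Finite := by
  cases t <;> simp [fv]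

theorem consts_finite (t : Term Sig) : t.consts.Finite := by
  cases t <;> simp [consts]

theorem subst_of_notMem_fv {t : Term Sig} {x : ℕ} (u : Term Sig) (h : x ∉ t.fv) :
    t.subst x u = t := by
  cases t with
  | var y =>
    have hyx : y ≠ x := fun hyx => h (hyx ▸ rfl)
    simp [subst, hyx]
  | const c => rfl

theorem subst_var_subst_var {t : Term Sig} {x y : ℕ} (hy : y ∉ t.fv) :
    (t.subst x (.var y)).subst y (.var x) = t := by
  cases t with
  | var z =>
    have hzy : z ≠ y := fun hzy => hy (hzy ▸ rfl)
    by_cases hz : z = x <;> simp [subst, hz, hzy]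
  | const c => rfl

end Term

namespace Formula

variable {Sig : Signature}

def vars : Formula Sig → Set ℕ
  | .top => ∅
  | .rel _ ts => ⋃ i, (ts i).fv
  | .and φ ψ => φ.vars ∪ ψ.vars
  | .dia φ => φ.vars
  | .all x φ => insert x φ.vars

theorem vars_finite (φ : Formula Sig) : φ.vars.Finite := by
  induction φ with
  | top => exact Set.finite_empty
  | rel S ts => exact Set.finite_iUnion fun i => (ts i).fv_finite
  | and φ ψ ihφ ihψ => exact ihφ.union ihψ
  | dia φ ih => exact ih
  | all x φ ih => exact ih.insert x

theorem consts_finite (φ : Formula Sig) : φ.consts.Finite := by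
  induction φ with
  | top => exact Set.finite_empty
  | rel S ts => exact Set.finite_iUnion fun i => (ts i).consts_finite
  | and φ ψ ihφ ihψ => exact ihφ.union ihψ
  | dia φ ih => exact ih
  | all x φ ih => exact ih

theorem fv_subset_vars (φ : Formula Sig) : φ.fv ⊆ φ.vars := by
  induction φ with
  | top | rel => exact subset_rfl
  | and φ ψ ihφ ihψ => exact Set.union_subset_union ihφ ihψ
  | dia φ ih => exact ih
  | all x φ ih => exact fun z hz => Set.mem_insert_of_mem _ (ih hz.1)

theorem subst_of_notMem_fv {φ : Formula Sig} {x : ℕ} (u : Term Sig) (h : x ∉ φ.fv) :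
    φ.subst x u = φ := by
  induction φ with
  | top => rfl
  | rel S ts =>
    simp only [fv, Set.mem_iUnion, not_exists] at h
    simp only [subst, fun i => Term.subst_of_notMem_fv u (h i)]
  | and φ ψ ihφ ihψ =>
    simp only [fv, Set.mem_union, not_or] at h
    simp [subst, ihφ h.1, ihψ h.2]
  | dia φ ih => simp [subst, ih h]
  | all y φ ih =>
    by_cases hyx : y = x
    · simp [subst, hyx]
    · have hx : x ∉ φ.fv := fun hx => h ⟨hx, fun hxy => hyx hxy.symm⟩
      simp [subst, hyx, ih hx]

theorem subst_var_subst_var {φ : Formula Sig} {x y : ℕ} (hy : y ∉ φ.vars) :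
    (φ.subst x (.var y)).subst y (.var x) = φ := by
  induction φ with
  | top => rfl
  | rel S ts =>
    simp only [vars, Set.mem_iUnion, not_exists] at hy
    simp only [subst, fun i => Term.subst_var_subst_var (x := x) (hy i)]
  | and φ ψ ihφ ihψ =>
    simp only [vars, Set.mem_union, not_or] at hy
    simp [subst, ihφ hy.1, ihψ hy.2]
  | dia φ ih => simp [subst, ih hy]
  | all z φ ih =>
    simp only [vars, Set.mem_insert_iff, not_or] at hy
    have hzy : z ≠ y := fun h => hy.1 h.symm
    by_cases hz : z = x
    · subst hz
      simp [subst, hzy, subst_of_notMem_fv _ fun h => hy.2 (φ.fv_subset_vars h)]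
    · simp [subst, hz, hzy, ih hy.2]

theorem freeFor_subst_var {φ : Formula Sig} {x y : ℕ} (hy : y ∉ φ.vars) :
    (φ.subst x (.var y)).freeFor y (.var x) := by
  induction φ with
  | top | rel => trivial
  | and φ ψ ihφ ihψ =>
    simp only [vars, Set.mem_union, not_or] at hy
    exact ⟨ihφ hy.1, ihψ hy.2⟩
  | dia φ ih => exact ih hy
  | all z φ ih =>
    simp only [vars, Set.mem_insert_iff, not_or] at hy
    by_cases hz : z = x
    · simp only [subst, hz]
      exact Or.inl fun h => hy.2 (φ.fv_subset_vars h.1)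
    · simp only [subst, if_neg hz]
      exact Or.inr ⟨hz, ih hy.2⟩

end Formula

theorem Derives.of_subst_var {Sig : Signature} {φ ψ : Formula Sig} {x y : ℕ}
    (h : Derives (φ.subst x (.var y)) (ψ.subst x (.var y))) (hφ : y ∉ φ.vars)
    (hψ : y ∉ ψ.vars) : Derives φ ψ := by
  simpa only [Formula.subst_var_subst_var hφ, Formula.subst_var_subst_var hψ] using
    h.termInst (Formula.freeFor_subst_var hφ) (Formula.freeFor_subst_var hψ)

section Lower

variable {Sig : Signature} {C : Type}

def Term.lower (σ : C → ℕ) : Term (Sig.extend C) → Term Sig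
  | .var x => .var x
  | .const (.inl c) => .const c
  | .const (.inr c) => .var (σ c)

def Formula.lower (σ : C → ℕ) : Formula (Sig.extend C) → Formula Sig
  | .top => .top
  | .rel S ts => .rel S fun i => (ts i).lower σ
  | .and φ ψ => .and (φ.lower σ) (ψ.lower σ)
  | .dia φ => .dia (φ.lower σ)
  | .all x φ => .all x (φ.lower σ)

def Term.newConsts (t : Term (Sig.extend C)) : Set C := Sum.inr ⁻¹' t.consts

def Formula.newConsts (φ : Formula (Sig.extend C)) : Set C := Sum.inr ⁻¹' φ.consts

namespace Term

theorem newConsts_finite (t : Term (Sig.extend C)) : t.newConsts.Finite :=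
  t.consts_finite.preimage Sum.inr_injective.injOn

theorem lower_lift (σ : C → ℕ) (t : Term Sig) :
    (t.lift : Term (Sig.extend C)).lower σ = t := by
  cases t <;> rfl

theorem lower_subst (σ : C → ℕ) {t : Term (Sig.extend C)} {x : ℕ} (u : Term (Sig.extend C))
    (h : ∀ c ∈ t.newConsts, σ c ≠ x) :
    (t.subst x u).lower σ = (t.lower σ).subst x (u.lower σ) := by
  rcases t with y | c | c
  · by_cases hy : y = x <;> simp [subst, lower, hy]
  · rfl
  · simp [subst, lower, h c rfl]

theorem fv_lower_subset (σ : C → ℕ) (t : Term (Sig.extend C)) :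
    (t.lower σ).fv ⊆ t.fv ∪ σ '' t.newConsts := by
  rcases t with y | c | c
  · exact Set.subset_union_left
  · exact Set.empty_subset _
  · exact fun z hz => .inr ⟨c, rfl, (Set.mem_singleton_iff.1 hz).symm⟩

theorem consts_lower_subset (σ : C → ℕ) (t : Term (Sig.extend C)) :
    (t.lower σ).consts ⊆ Sum.inl ⁻¹' t.consts := by
  rcases t with y | c | c
  · exact Set.empty_subset _
  · exact fun _ h => congrArg Sum.inl h
  · exact Set.empty_subset _

end Term

namespace Formula

theorem newConsts_rel (S : (Sig.extend C).Rel)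
    (ts : Fin ((Sig.extend C).arity S) → Term (Sig.extend C)) :
    (rel S ts : Formula (Sig.extend C)).newConsts = ⋃ i, (ts i).newConsts :=
  Set.preimage_iUnion

theorem newConsts_and (φ ψ : Formula (Sig.extend C)) :
    (φ.and ψ).newConsts = φ.newConsts ∪ ψ.newConsts :=
  Set.preimage_union

theorem newConsts_finite (φ : Formula (Sig.extend C)) : φ.newConsts.Finite :=
  φ.consts_finite.preimage Sum.inr_injective.injOn

theorem lower_lift (σ : C → ℕ) (φ : Formula Sig) :
    (φ.lift : Formula (Sig.extend C)).lower σ = φ := by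
  induction φ with
  | top => rfl
  | rel S ts => simp only [lift, lower, Term.lower_lift]
  | and φ ψ ihφ ihψ => simp [lift, lower, ihφ, ihψ]
  | dia φ ih => simp [lift, lower, ih]
  | all x φ ih => simp [lift, lower, ih]

theorem lower_subst (σ : C → ℕ) {φ : Formula (Sig.extend C)} {x : ℕ}
    (u : Term (Sig.extend C)) (h : ∀ c ∈ φ.newConsts, σ c ≠ x) :
    (φ.subst x u).lower σ = (φ.lower σ).subst x (u.lower σ) := by
  induction φ with
  | top => rfl
  | rel S ts =>
    simp only [subst, lower]
    congr 1
    funext i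
    exact Term.lower_subst σ u fun c hc => h c (Set.mem_iUnion.2 ⟨i, hc⟩)
  | and φ ψ ihφ ihψ =>
    simp [subst, lower, ihφ fun c hc => h c (.inl hc), ihψ fun c hc => h c (.inr hc)]
  | dia φ ih => simp [subst, lower, ih h]
  | all y φ ih => by_cases hy : y = x <;> simp [subst, lower, hy, ih h]

theorem fv_lower_subset (σ : C → ℕ) (φ : Formula (Sig.extend C)) :
    (φ.lower σ).fv ⊆ φ.fv ∪ σ '' φ.newConsts := by
  induction φ with
  | top => exact Set.empty_subset _
  | rel S ts =>
    rw [newConsts_rel]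
    refine Set.iUnion_subset fun i => (Term.fv_lower_subset σ (ts i)).trans ?_
    gcongr
    exacts [Set.subset_iUnion (fun i => (ts i).fv) i,
      Set.subset_iUnion (fun i => (ts i).newConsts) i]
  | and φ ψ ihφ ihψ =>
    simp only [lower, fv, newConsts_and, Set.image_union]
    exact (Set.union_subset_union ihφ ihψ).trans (Set.union_union_union_comm ..).subset
  | dia φ ih => exact ih
  | all y φ ih => exact fun z ⟨hz, hzy⟩ => (ih hz).imp (fun h => ⟨h, hzy⟩) id

theorem vars_lower_subset (σ : C → ℕ) (φ : Formula (Sig.extend C)) :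
    (φ.lower σ).vars ⊆ φ.vars ∪ σ '' φ.newConsts := by
  induction φ with
  | top => exact Set.empty_subset _
  | rel S ts =>
    rw [newConsts_rel]
    refine Set.iUnion_subset fun i => (Term.fv_lower_subset σ (ts i)).trans ?_
    gcongr
    exacts [Set.subset_iUnion (fun i => (ts i).fv) i,
      Set.subset_iUnion (fun i => (ts i).newConsts) i]
  | and φ ψ ihφ ihψ =>
    simp only [lower, vars, newConsts_and, Set.image_union]
    exact (Set.union_subset_union ihφ ihψ).trans (Set.union_union_union_comm ..).subset
  | dia φ ih => exact ih
  | all y φ ih => exact (Set.insert_subset_insert ih).trans Set.insert_union.symm.subset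

theorem consts_lower_subset (σ : C → ℕ) (φ : Formula (Sig.extend C)) :
    (φ.lower σ).consts ⊆ Sum.inl ⁻¹' φ.consts := by
  induction φ with
  | top => exact Set.empty_subset _
  | rel S ts =>
    refine Set.iUnion_subset fun i => (Term.consts_lower_subset σ (ts i)).trans ?_
    exact Set.preimage_mono (Set.subset_iUnion (fun i => (ts i).consts) i)
  | and φ ψ ihφ ihψ => exact Set.union_subset_union ihφ ihψ
  | dia φ ih => exact ih
  | all y φ ih => exact ih

theorem freeFor_lower {σ : C → ℕ} {φ : Formula (Sig.extend C)} {x : ℕ}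
    {t : Term (Sig.extend C)} (h : φ.freeFor x t) (ht : ∀ c ∈ t.newConsts, σ c ∉ φ.vars)
    (hφ : ∀ c ∈ φ.newConsts, σ c ≠ x) : (φ.lower σ).freeFor x (t.lower σ) := by
  induction φ with
  | top | rel => trivial
  | and φ ψ ihφ ihψ =>
    exact ⟨ihφ h.1 (fun c hc hm => ht c hc (.inl hm)) (fun c hc => hφ c (.inl hc)),
      ihψ h.2 (fun c hc hm => ht c hc (.inr hm)) (fun c hc => hφ c (.inr hc))⟩
  | dia φ ih => exact ih h ht hφ
  | all y φ ih =>
    rcases h with hx | ⟨hy, h⟩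
    · refine .inl fun hmem => ?_
      rcases fv_lower_subset σ (.all y φ) hmem with hm | ⟨c, hc, hcx⟩
      exacts [hx hm, hφ c hc hcx]
    · refine .inr ⟨fun hmem => ?_,
        ih h (fun c hc hm => ht c hc (Set.mem_insert_of_mem _ hm)) hφ⟩
      rcases t.fv_lower_subset σ hmem with hm | ⟨c, hc, hcy⟩
      exacts [hy hm, ht c hc (hcy ▸ Set.mem_insert _ _)]

end Formula

end Lower

section FreshFilter

open Filter

variable {Sig : Signature} {C : Type}

def freshFilter (C : Type) : Filter (C → ℕ) :=
  ⨅ s : Finset C × Finset ℕ, 𝓟 {σ | Set.InjOn σ s.1 ∧ ∀ c ∈ s.1, σ c ∉ s.2}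

theorem hasBasis_freshFilter : (freshFilter C).HasBasis (fun _ => True)
    fun s : Finset C × Finset ℕ => {σ | Set.InjOn σ s.1 ∧ ∀ c ∈ s.1, σ c ∉ s.2} := by
  classical
  refine hasBasis_iInf_principal fun s t => ⟨(s.1 ∪ t.1, s.2 ∪ t.2), ?_, ?_⟩ <;>
    exact fun σ ⟨hinj, hV⟩ =>
      ⟨hinj.mono (by simp), fun c hc hcV => hV c (by simp [hc]) (by simp [hcV])⟩

theorem exists_injOn_forall_notMem (s : Finset C) (V : Finset ℕ) :
    ∃ σ : C → ℕ, Set.InjOn σ s ∧ ∀ c ∈ s, σ c ∉ V := by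
  obtain ⟨f, hf⟩ := Set.countable_iff_exists_injOn.1 s.countable_toSet
  refine ⟨fun c => V.sup id + 1 + f c, fun a ha b hb h => hf ha hb (by simpa using h),
    fun c _ hc => ?_⟩
  have := V.le_sup (f := id) hc
  simp only [id] at this
  omega

instance : (freshFilter C).NeBot :=
  hasBasis_freshFilter.neBot_iff.2 fun {s} _ => exists_injOn_forall_notMem s.1 s.2

theorem eventually_forall_apply_notMem {s : Set C} {V : Set ℕ} (hs : s.Finite) (hV : V.Finite) :
    ∀ᶠ σ in freshFilter C, ∀ c ∈ s, σ c ∉ V :=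
  hasBasis_freshFilter.mem_iff.2 ⟨(hs.toFinset, hV.toFinset), trivial,
    fun σ hσ c hc => by simpa using hσ.2 c (by simpa using hc)⟩

theorem eventually_apply_ne_apply {c c' : C} (h : c ≠ c') :
    ∀ᶠ σ in freshFilter C, σ c ≠ σ c' := by
  classical
  exact hasBasis_freshFilter.mem_iff.2 ⟨({c, c'}, ∅), trivial,
    fun σ hσ => hσ.1.ne (by simp) (by simp) h⟩

namespace Formula

theorem eventually_lower_subst (φ : Formula (Sig.extend C)) (x : ℕ) (u : Term (Sig.extend C)) :
    ∀ᶠ σ in freshFilter C, (φ.subst x u).lower σ = (φ.lower σ).subst x (u.lower σ) := by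
  filter_upwards [eventually_forall_apply_notMem φ.newConsts_finite (Set.finite_singleton x)]
    with σ hσ
  exact lower_subst σ u hσ

theorem eventually_notMem_fv_lower {φ : Formula (Sig.extend C)} {x : ℕ} (hx : x ∉ φ.fv) :
    ∀ᶠ σ in freshFilter C, x ∉ (φ.lower σ).fv := by
  filter_upwards [eventually_forall_apply_notMem φ.newConsts_finite (Set.finite_singleton x)]
    with σ hσ hmem
  rcases φ.fv_lower_subset σ hmem with h | ⟨c, hc, rfl⟩
  exacts [hx h, hσ c hc rfl]

theorem eventually_freeFor_lower {φ : Formula (Sig.extend C)} {x : ℕ} {t : Term (Sig.extend C)}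
    (h : φ.freeFor x t) : ∀ᶠ σ in freshFilter C, (φ.lower σ).freeFor x (t.lower σ) := by
  filter_upwards [eventually_forall_apply_notMem t.newConsts_finite φ.vars_finite,
    eventually_forall_apply_notMem φ.newConsts_finite (Set.finite_singleton x)] with σ ht hφ
  exact freeFor_lower h ht hφ

theorem eventually_apply_notMem_vars_lower {φ : Formula (Sig.extend C)} {c : C}
    (hc : c ∉ φ.newConsts) : ∀ᶠ σ in freshFilter C, σ c ∉ (φ.lower σ).vars := by
  filter_upwards [eventually_forall_apply_notMem (Set.finite_singleton c) φ.vars_finite,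
    φ.newConsts_finite.eventually_all.2 fun c' hc' =>
      eventually_apply_ne_apply (ne_of_mem_of_not_mem hc' hc)] with σ hvars hne hmem
  rcases φ.vars_lower_subset σ hmem with h | ⟨c', hc', he⟩
  exacts [hvars c rfl h, hne c' hc' he]

end Formula

end FreshFilter

theorem Derives.eventually_lower {Sig : Signature} {C : Type} {φ ψ : Formula (Sig.extend C)}
    (h : Derives φ ψ) : ∀ᶠ σ in freshFilter C, Derives (φ.lower σ) (ψ.lower σ) := by
  induction h with
  | topIntro => exact .of_forall fun _ => .topIntro _
  | refl => exact .of_forall fun _ => .refl _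
  | andE₁ => exact .of_forall fun _ => .andE₁ _ _
  | andE₂ => exact .of_forall fun _ => .andE₂ _ _
  | diaTrans => exact .of_forall fun _ => .diaTrans _
  | diaAll => exact .of_forall fun _ => .diaAll _ _
  | andI _ _ ih₁ ih₂ => filter_upwards [ih₁, ih₂] with σ h₁ h₂ using h₁.andI h₂
  | cut _ _ ih₁ ih₂ => filter_upwards [ih₁, ih₂] with σ h₁ h₂ using h₁.cut h₂
  | nec _ ih => filter_upwards [ih] with σ h using h.nec
  | allR _ hx ih =>
    filter_upwards [ih, Formula.eventually_notMem_fv_lower hx] with σ h hx using h.allR hx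
  | @allL φ ψ x t _ ht ih =>
    filter_upwards [ih, φ.eventually_lower_subst x t, Formula.eventually_freeFor_lower ht]
      with σ h hsubst ht
    exact (hsubst ▸ h).allL ht
  | @termInst φ ψ x t _ hφ hψ ih =>
    filter_upwards [ih, φ.eventually_lower_subst x t, ψ.eventually_lower_subst x t,
      Formula.eventually_freeFor_lower hφ, Formula.eventually_freeFor_lower hψ]
      with σ h hsubstφ hsubstψ hφ hψ
    rw [hsubstφ, hsubstψ]
    exact h.termInst hφ hψ
  | @constGen φ ψ x c _ hφ hψ ih =>
    rcases c with c | c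
    · filter_upwards [ih, φ.eventually_lower_subst x (.const (.inl c)),
        ψ.eventually_lower_subst x (.const (.inl c))] with σ h hsubstφ hsubstψ
      rw [hsubstφ, hsubstψ] at h
      exact h.constGen (fun hm => hφ (φ.consts_lower_subset σ hm))
        (fun hm => hψ (ψ.consts_lower_subset σ hm))
    · filter_upwards [ih, φ.eventually_lower_subst x (.const (.inr c)),
        ψ.eventually_lower_subst x (.const (.inr c)),
        Formula.eventually_apply_notMem_vars_lower hφ,
        Formula.eventually_apply_notMem_vars_lower hψ] with σ h hsubstφ hsubstψ hφ hψ
      rw [hsubstφ, hsubstψ] at h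
      exact h.of_subst_var hφ hψ

/-- If φ and ψ are formulas in the language of Σ and φ ⊢ ψ is derivable
in QRC₁ over the signature Σ extended by a collection C of new constants, then
φ ⊢ ψ is derivable in QRC₁ over Σ. -/
theorem qrc1_new_constants_conservative (Sig : Signature) (C : Type)
    (φ ψ : Formula Sig)
    (h : Derives (Formula.lift φ : Formula (Sig.extend C)) (Formula.lift ψ)) :
    Derives φ ψ := by
  obtain ⟨σ, hσ⟩ := h.eventually_lower.exists
  rwa [Formula.lower_lift, Formula.lower_lift] at hσ
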